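/- Let p be a nonzero symmetric multivariate polynomial in ν variables over the complex numbers all of whose coefficients are integers (i.e., lie in the image of ℤ in ℂ). Then there exists a polynomial q in ν variables with integer coefficients such that p = q composed with the elementary symmetric polynomials, and the weight of q is at most the total degree of p. -/

import Mathlib

/-! Over `ℤ` the fundamental theorem of symmetric polynomials writes `p = q(e₁, …, e_ν)`. Since
`eᵢ` is homogeneous of degree `i`, substituting the `eᵢ` sends the part of `q` of weight `k` to a
homogeneous polynomial of degree `k`. The substitution is injective, so the part of `q` of top
weight survives as a nonzero homogeneous component of `p`, whence `weight q ≤ deg p`. -/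

/-- The weight of a multivariate polynomial: the maximum over its monomials
`X_1^{k_1} ⋯ X_ν^{k_ν}` of `∑ i, i * k_i` (variables counted from 1). -/
def mweight {R : Type*} [CommRing R] {n : ℕ} (q : MvPolynomial (Fin n) R) : ℕ :=
  q.support.sup (fun m => ∑ i : Fin n, (i.1 + 1) * m i)

namespace MvPolynomial

variable {σ τ R S : Type*} [CommSemiring R] [CommSemiring S]

theorem isHomogeneous_esymm [Fintype σ] (n : ℕ) : (esymm σ R n).IsHomogeneous n := by
  refine IsHomogeneous.sum _ _ _ fun t ht => ?_
  convert IsHomogeneous.prod t _ (fun _ => 1) fun i _ => isHomogeneous_X R i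
  simp [(Finset.mem_powersetCard.1 ht).2]

theorem totalDegree_map_of_injective {f : R →+* S} (hf : Function.Injective f)
    (p : MvPolynomial σ R) : (map f p).totalDegree = p.totalDegree := by
  simp only [totalDegree, support_map_of_injective p hf]

theorem IsSymmetric.of_map {f : R →+* S} (hf : Function.Injective f) {p : MvPolynomial σ R}
    (hp : (MvPolynomial.map f p).IsSymmetric) : p.IsSymmetric := fun e =>
  map_injective f hf (by rw [map_rename, hp e])

section WeightedAeval

variable {w : σ → ℕ} {f : σ → MvPolynomial τ R}

theorem isHomogeneous_aeval_monomial (hf : ∀ i, (f i).IsHomogeneous (w i)) (s : σ →₀ ℕ)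
    (a : R) : (aeval f (monomial s a)).IsHomogeneous (Finsupp.weight w s) := by
  rw [aeval_monomial, algebraMap_eq, Finsupp.weight_apply, ← zero_add (s.sum _)]
  refine (isHomogeneous_C _ a).mul (IsHomogeneous.prod _ _ _ fun i _ => ?_)
  dsimp only
  rw [smul_eq_mul, mul_comm]
  exact (hf i).pow (s i)

theorem homogeneousComponent_aeval (hf : ∀ i, (f i).IsHomogeneous (w i)) (d : ℕ)
    (q : MvPolynomial σ R) :
    homogeneousComponent d (aeval f q) = aeval f (weightedHomogeneousComponent w d q) := by
  classical
  induction q using induction_on' with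
  | monomial s a =>
    rw [homogeneousComponent_of_mem (isHomogeneous_aeval_monomial hf s a),
      weightedHomogeneousComponent_of_mem (isWeightedHomogeneous_monomial w s a rfl)]
    split_ifs <;> simp
  | add p q hp hq => simp only [map_add, hp, hq]

end WeightedAeval

theorem weightedHomogeneousComponent_weightedTotalDegree_ne_zero {M : Type*}
    [AddCommMonoid M] [LinearOrder M] [OrderBot M] (w : σ → M) {q : MvPolynomial σ R}
    (hq : q ≠ 0) : weightedHomogeneousComponent w (weightedTotalDegree w q) q ≠ 0 := by
  classical
  obtain ⟨s, hs, hsw⟩ : ∃ s ∈ q.support, weightedTotalDegree w q = Finsupp.weight w s :=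
    Finset.exists_mem_eq_sup _ (support_nonempty.2 hq) _
  intro h
  have hcoeff := congrArg (coeff s) h
  rw [coeff_weightedHomogeneousComponent, if_pos hsw.symm, coeff_zero] at hcoeff
  exact mem_support_iff.1 hs hcoeff

theorem weightedTotalDegree_le_totalDegree_aeval {w : σ → ℕ} {f : σ → MvPolynomial τ R}
    (hf : ∀ i, (f i).IsHomogeneous (w i)) (hinj : Function.Injective (aeval (R := R) f))
    (q : MvPolynomial σ R) : weightedTotalDegree w q ≤ (aeval f q).totalDegree := by
  rcases eq_or_ne q 0 with rfl | hq
  · simp [weightedTotalDegree_zero]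
  by_contra! hlt
  have hcomp := homogeneousComponent_eq_zero _ _ hlt
  rw [homogeneousComponent_aeval hf, ← map_zero (aeval (R := R) f)] at hcomp
  exact weightedHomogeneousComponent_weightedTotalDegree_ne_zero w hq (hinj hcomp)

theorem aeval_esymm_injective (R : Type*) [CommRing R] (n : ℕ) :
    Function.Injective (aeval (R := R) fun i : Fin n => esymm (Fin n) R (i + 1)) := fun p q h =>
  esymmAlgHom_fin_injective R le_rfl (Subtype.ext (by simpa only [esymmAlgHom_apply] using h))

theorem exists_aeval_esymm_eq {R : Type*} [CommRing R] {n : ℕ} {p : MvPolynomial (Fin n) R}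
    (hp : p.IsSymmetric) :
    ∃ q, aeval (R := R) (fun i : Fin n => esymm (Fin n) R (i + 1)) q = p := by
  obtain ⟨q, hq⟩ := (esymmAlgHom_fin_bijective R n).2 ⟨p, hp⟩
  exact ⟨q, by rw [← esymmAlgHom_apply, hq]⟩

theorem weightedTotalDegree_le_totalDegree_aeval_esymm {R : Type*} [CommRing R] {n : ℕ}
    (q : MvPolynomial (Fin n) R) :
    weightedTotalDegree (fun i : Fin n => i.1 + 1) q
      ≤ (aeval (R := R) (fun i : Fin n => esymm (Fin n) R (i + 1)) q).totalDegree :=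
  weightedTotalDegree_le_totalDegree_aeval (fun _ => isHomogeneous_esymm _)
    (aeval_esymm_injective R n) q

theorem map_aeval_esymm [Fintype σ] {n : ℕ} (f : R →+* S) (q : MvPolynomial (Fin n) R) :
    map f (aeval (fun i : Fin n => esymm σ R (i + 1)) q)
      = bind₁ (fun i : Fin n => esymm σ S (i + 1)) (map f q) := by
  simp only [aeval_eq_bind₁, map_bind₁, map_esymm]

end MvPolynomial

open MvPolynomial

theorem mweight_eq_weightedTotalDegree {R : Type*} [CommRing R] {n : ℕ}
    (q : MvPolynomial (Fin n) R) :
    mweight q = weightedTotalDegree (fun i : Fin n => i.1 + 1) q := by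
  refine Finset.sup_congr rfl fun m _ => ?_
  simp [Finsupp.weight_apply, Finsupp.sum_fintype, mul_comm]

theorem mpolysym_general (ν : ℕ) (p : MvPolynomial (Fin ν) ℂ)
    (hint : ∀ m, p.coeff m ∈ Set.range ((↑·) : ℤ → ℂ))
    (hsym : p.IsSymmetric) :
    ∃ q : MvPolynomial (Fin ν) ℤ,
      p = MvPolynomial.bind₁
            (fun i : Fin ν => MvPolynomial.esymm (Fin ν) ℂ (i.1 + 1))
            (MvPolynomial.map (Int.castRingHom ℂ) q) ∧
      mweight q ≤ p.totalDegree := by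
  have hinj : Function.Injective (Int.castRingHom ℂ) := Int.cast_injective
  obtain ⟨p₀, rfl⟩ : p ∈ Set.range (map (Int.castRingHom ℂ)) :=
    mem_range_map_iff_coeffs_subset.2 fun c hc => by
      obtain ⟨m, -, rfl⟩ := mem_coeffs_iff.1 hc
      exact hint m
  obtain ⟨q, rfl⟩ := exists_aeval_esymm_eq (hsym.of_map hinj)
  refine ⟨q, map_aeval_esymm _ q, ?_⟩
  rw [mweight_eq_weightedTotalDegree, totalDegree_map_of_injective hinj]
  exact weightedTotalDegree_le_totalDegree_aeval_esymm q

theorem mpolysym (ν : ℕ) (p : MvPolynomial (Fin ν) ℂ)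
    (hint : ∀ m, p.coeff m ∈ Set.range ((↑·) : ℤ → ℂ))
    (hsym : p.IsSymmetric) (hp0 : p ≠ 0) :
    ∃ q : MvPolynomial (Fin ν) ℤ,
      p = MvPolynomial.bind₁
            (fun i : Fin ν => MvPolynomial.esymm (Fin ν) ℂ (i.1 + 1))
            (MvPolynomial.map (Int.castRingHom ℂ) q) ∧
      mweight q ≤ p.totalDegree :=
  mpolysym_general ν p hint hsym
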